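/- For every n ≥ 5, there exists a subgroup K of H = (Z_2)^{n+1}/⟨(1,...,1)⟩ with H/K ≅ (Z_2)^{n-1} such that K contains no nontrivial element of the form φ_k or φ_iφ_j (1 ≤ i < j ≤ n+1). -/

import Mathlib

open scoped BigOperators

/-- Vectors of length `n+1` over `ZMod p`. -/
abbrev GFVec (p n : ℕ) := Fin (n + 1) → ZMod p

/-- The subgroup generated by the constant vector `(1,...,1)`. -/
def diagSub (p n : ℕ) : AddSubgroup (GFVec p n) :=
  AddSubgroup.zmultiples (fun _ => (1 : ZMod p))

/-- The group `H = (Z_p)^{n+1} / ⟨(1,...,1)⟩`. -/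
abbrev GFGroup (p n : ℕ) := GFVec p n ⧸ diagSub p n

/-- The canonical generator `φ_i`, the image of the `i`-th standard basis vector. -/
def gen (p n : ℕ) (i : Fin (n + 1)) : GFGroup p n :=
  QuotientAddGroup.mk (Pi.single i (1 : ZMod p))

/-- An element of `H` is forbidden (acts with fixed points) if it is a nontrivial-looking
product `φ_{i_1}^{l_1} ⋯ φ_{i_j}^{l_j}` with `1 ≤ j ≤ d`, distinct indices and
exponents `l_t ≢ 0 (mod p)`. -/
def IsForbidden (p n d : ℕ) (x : GFGroup p n) : Prop :=
  ∃ (s : Finset (Fin (n + 1))) (l : Fin (n + 1) → ZMod p),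
    s.Nonempty ∧ s.card ≤ d ∧ (∀ i ∈ s, l i ≠ 0) ∧
    x = QuotientAddGroup.mk (fun i => if i ∈ s then l i else 0)

/-!
Send the `i`-th basis vector of `(ZMod 2)^{n+1}` to a vector `c i` of a `ZMod 2`-module `V`. If
the `c i` span `V` and sum to zero, this linear map descends to a surjection `θ : H → V`, and
`K = ker θ` satisfies `H ⧸ K ≃ V`. Since `θ φ_i = c i` and `θ (φ_i φ_j) = c i + c j`, the subgroup
`K` contains no `φ_i` and no `φ_i φ_j` as soon as the `c i` are nonzero and pairwise distinct
(in characteristic two, `c i + c j = 0` means `c i = c j`).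

For `V = (ZMod 2)^{n-1}` take `c k = e_k` for `k < n - 1`, and let `c (n - 1)` and `c n` be the
indicator vectors of the two blocks of the partition `{0, 1} ⊔ {2, …, n - 2}`. They sum to zero
because every coordinate lies in exactly one block, and for `n ≥ 5` both blocks have at least two
elements, which keeps the `c k` pairwise distinct.
-/

open Finset

section

variable {ι V : Type*} [AddCommGroup V] [Module (ZMod 2) V]

lemma sum_ne_zero_of_card_le_two {c : ι → V} (hc0 : ∀ i, c i ≠ 0) (hc : Function.Injective c)
    {s : Finset ι} (hs : s.Nonempty) (hcard : s.card ≤ 2) : ∑ i ∈ s, c i ≠ 0 := by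
  classical
  obtain hcard | hcard : s.card = 1 ∨ s.card = 2 := by have := hs.card_pos; omega
  · obtain ⟨a, rfl⟩ := card_eq_one.mp hcard
    simpa using hc0 a
  · obtain ⟨a, b, hab, rfl⟩ := card_eq_two.mp hcard
    rw [sum_pair hab, ← ZModModule.sub_eq_add (c a), sub_ne_zero]
    exact hc.ne hab

lemma linearCombination_ite_mem [Fintype ι] [DecidableEq ι] (c : ι → V) (s : Finset ι)
    {l : ι → ZMod 2} (hl : ∀ i ∈ s, l i ≠ 0) :
    Fintype.linearCombination (ZMod 2) c (fun i => if i ∈ s then l i else 0) = ∑ i ∈ s, c i := by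
  have hl1 : ∀ i ∈ s, l i = 1 := fun i hi => by
    have key : ∀ a : ZMod 2, a ≠ 0 → a = 1 := by decide
    exact key _ (hl i hi)
  rw [Fintype.linearCombination_apply]
  simp_rw [ite_smul, zero_smul]
  rw [sum_ite_mem, univ_inter]
  exact sum_congr rfl fun i hi => by rw [hl1 i hi, one_smul]

end

theorem exists_addSubgroup_forall_isForbidden_eq_zero {n : ℕ} {V : Type*} [AddCommGroup V]
    [Module (ZMod 2) V] (c : Fin (n + 1) → V) (hc0 : ∀ i, c i ≠ 0) (hc : Function.Injective c)
    (hsum : ∑ i, c i = 0) (hspan : Submodule.span (ZMod 2) (Set.range c) = ⊤) :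
    ∃ K : AddSubgroup (GFGroup 2 n),
      Nonempty ((GFGroup 2 n ⧸ K) ≃+ V) ∧ ∀ x ∈ K, IsForbidden 2 n 2 x → x = 0 := by
  set θ := (Fintype.linearCombination (ZMod 2) c).toAddMonoidHom
  have hdiag : diagSub 2 n ≤ θ.ker := by
    rw [diagSub, AddSubgroup.zmultiples_le, AddMonoidHom.mem_ker]
    simpa [θ, Fintype.linearCombination_apply] using hsum
  set θbar := QuotientAddGroup.lift (diagSub 2 n) θ hdiag
  have hsurj : Function.Surjective θbar := by
    intro v
    have hv : v ∈ LinearMap.range (Fintype.linearCombination (ZMod 2) c) := by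
      rw [Fintype.range_linearCombination, hspan]
      trivial
    obtain ⟨f, rfl⟩ := hv
    exact ⟨QuotientAddGroup.mk f, rfl⟩
  refine ⟨θbar.ker, ⟨QuotientAddGroup.quotientKerEquivOfSurjective θbar hsurj⟩, ?_⟩
  rintro x hx ⟨s, l, hs, hcard, hl, rfl⟩
  have hx' : ∑ i ∈ s, c i = 0 := (linearCombination_ite_mem c s hl).symm.trans hx
  exact absurd hx' (sum_ne_zero_of_card_le_two hc0 hc hs hcard)

def column (n : ℕ) (k : Fin (n + 1)) : Fin (n - 1) → ZMod 2 := fun j =>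
  if (k : ℕ) = j ∨ ((k : ℕ) = n - 1 ∧ (j : ℕ) < 2) ∨ ((k : ℕ) = n ∧ 2 ≤ (j : ℕ)) then 1 else 0

lemma column_apply_eq_one_iff {n : ℕ} {k : Fin (n + 1)} {j : Fin (n - 1)} :
    column n k j = 1 ↔
      (k : ℕ) = j ∨ ((k : ℕ) = n - 1 ∧ (j : ℕ) < 2) ∨ ((k : ℕ) = n ∧ 2 ≤ (j : ℕ)) := by
  unfold column
  split_ifs with h
  exacts [iff_of_true rfl h, iff_of_false zero_ne_one h]

lemma column_ne_zero {n : ℕ} (hn : 4 ≤ n) (k : Fin (n + 1)) : column n k ≠ 0 := by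
  intro h
  have hk := k.isLt
  let j : Fin (n - 1) :=
    ⟨if (k : ℕ) < n - 1 then k else if (k : ℕ) = n - 1 then 0 else 2, by split_ifs <;> omega⟩
  have h1 : column n k j = 1 := column_apply_eq_one_iff.mpr (by simp only [j]; split_ifs <;> omega)
  simp [h] at h1

lemma column_injective {n : ℕ} (hn : 5 ≤ n) : Function.Injective (column n) := by
  intro a b h
  -- comparing the coordinates `0, 1, 2, 3, a, b` already tells any two columns apart
  have test : ∀ j : Fin (n - 1), column n a j = 1 ↔ column n b j = 1 := fun j => by rw [h]
  simp only [column_apply_eq_one_iff] at test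
  have ha := a.isLt
  have hb := b.isLt
  have t0 := test ⟨0, by omega⟩
  have t1 := test ⟨1, by omega⟩
  have t2 := test ⟨2, by omega⟩
  have t3 := test ⟨3, by omega⟩
  have ta := test ⟨min a (n - 2), by omega⟩
  have tb := test ⟨min b (n - 2), by omega⟩
  simp only at t0 t1 t2 t3 ta tb
  ext
  omega

lemma sum_column (n : ℕ) : ∑ k, column n k = 0 := by
  funext j
  have hj := j.isLt
  simp only [Finset.sum_apply, column, Finset.sum_boole, Pi.zero_apply]
  have hcard : #{k : Fin (n + 1) |
      (k : ℕ) = j ∨ ((k : ℕ) = n - 1 ∧ (j : ℕ) < 2) ∨ ((k : ℕ) = n ∧ 2 ≤ (j : ℕ))} = 2 := by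
    rw [card_eq_two]
    refine ⟨⟨j, by omega⟩, ⟨if (j : ℕ) < 2 then n - 1 else n, by split_ifs <;> omega⟩, ?_, ?_⟩
    · simp only [ne_eq, Fin.ext_iff]; split_ifs <;> omega
    · ext k
      simp only [mem_filter, mem_univ, true_and, mem_insert, mem_singleton, Fin.ext_iff]
      split_ifs <;> omega
  rw [hcard]
  rfl

lemma column_eq_single (n : ℕ) (j : Fin (n - 1)) : column n ⟨j, by omega⟩ = Pi.single j 1 := by
  funext i
  have := j.isLt
  simp only [column, Pi.single_apply, Fin.ext_iff]
  exact if_congr (by omega) rfl rfl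

lemma span_range_column (n : ℕ) : Submodule.span (ZMod 2) (Set.range (column n)) = ⊤ := by
  refine eq_top_mono (Submodule.span_mono ?_) (Pi.basisFun (ZMod 2) (Fin (n - 1))).span_eq
  rintro _ ⟨j, rfl⟩
  exact ⟨⟨j, by omega⟩, by rw [Pi.basisFun_apply, column_eq_single]⟩

/-- for every `n ≥ 5` there is a subgroup `K` of `H = (Z_2)^{n+1}/⟨(1,…,1)⟩`
with `H/K ≅ (Z_2)^{n-1}` avoiding all nontrivial `φ_k` and `φ_iφ_j`. -/
theorem stmt_6 (n : ℕ) (hn : 5 ≤ n) :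
    ∃ K : AddSubgroup (GFGroup 2 n),
      Nonempty ((GFGroup 2 n ⧸ K) ≃+ (Fin (n - 1) → ZMod 2)) ∧
      ∀ x ∈ K, IsForbidden 2 n 2 x → x = 0 :=
  exists_addSubgroup_forall_isForbidden_eq_zero (column n) (column_ne_zero (by omega))
    (column_injective hn) (sum_column n) (span_range_column n)
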